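/- arXiv:1701.05673 — 8 statements merged into one kernel-verified Lean document; each statement's English description precedes it below -/
import Mathlib

section
/- If x ∈ ℝⁿ satisfies 0 ≤ x entrywise and eᵀx ≤ 1, then the matrix F'ₓ = I − αR(x ⊗ I + I ⊗ x) is invertible and its inverse has all entries nonnegative (i.e., F'ₓ is a nonsingular M-matrix). -/
/-!
`F'ₓ = I - B` with `B = α R (x ⊗ I + I ⊗ x) ≥ 0`. Since `R` is column-stochastic, the column
sums of `B` are those of `α (x ⊗ I + I ⊗ x)`, namely `2α eᵀx ≤ 2α < 1`. Hence `‖Bᵀ‖_∞ < 1`, and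
`(I - Bᵀ)⁻¹` is the Neumann series `∑ (Bᵀ)ᵏ` of nonnegative matrices.
-/

open Matrix BigOperators Finset Filter

noncomputable section

/-- Kronecker product of two vectors: `(u ⊗ w)_{(i,j)} = u_i w_j`. -/
def kron {n : ℕ} (u w : Fin n → ℝ) : Fin n × Fin n → ℝ := fun p => u p.1 * w p.2

/-- `u ⊗ I` : the `n² × n` Kronecker product of a vector with the identity,
so that `(u ⊗ I) w = u ⊗ w`. -/
def kronVecId {n : ℕ} (u : Fin n → ℝ) : Matrix (Fin n × Fin n) (Fin n) ℝ :=
  Matrix.of fun p k => u p.1 * (if p.2 = k then (1 : ℝ) else 0)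

/-- `I ⊗ u` : the `n² × n` Kronecker product of the identity with a vector,
so that `(I ⊗ u) w = w ⊗ u`. -/
def idKronVec {n : ℕ} (u : Fin n → ℝ) : Matrix (Fin n × Fin n) (Fin n) ℝ :=
  Matrix.of fun p k => (if p.1 = k then (1 : ℝ) else 0) * u p.2

/-- `F(x) = x − α R (x ⊗ x) − (1 − α) v`. -/
def Fmap {n : ℕ} (α : ℝ) (R : Matrix (Fin n) (Fin n × Fin n) ℝ) (v : Fin n → ℝ)
    (x : Fin n → ℝ) : Fin n → ℝ :=
  x - α • R.mulVec (kron x x) - (1 - α) • v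

/-- `F'ₓ = I − α R (x ⊗ I + I ⊗ x)`. -/
def Fprime {n : ℕ} (α : ℝ) (R : Matrix (Fin n) (Fin n × Fin n) ℝ)
    (x : Fin n → ℝ) : Matrix (Fin n) (Fin n) ℝ :=
  1 - α • (R * (kronVecId x + idKronVec x))

namespace Matrix

variable {ι : Type*} [Fintype ι]

theorem sum_mul_apply_of_sum_col_eq_one {κ ν : Type*} [Fintype κ] {S : Type*}
    [NonAssocSemiring S] {A : Matrix ι κ S} (hA : ∀ p, ∑ i, A i p = 1) (M : Matrix κ ν S)
    (j : ν) : ∑ i, (A * M) i j = ∑ p, M p j := by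
  simp only [mul_apply]
  rw [sum_comm]
  exact sum_congr rfl fun p _ => by rw [← sum_mul, hA p, one_mul]

variable [DecidableEq ι]

theorem isUnit_one_sub_and_inv_nonneg_of_sum_row_lt_one {A : Matrix ι ι ℝ}
    (hA0 : ∀ i j, 0 ≤ A i j) (hA : ∀ i, ∑ j, A i j < 1) :
    IsUnit (1 - A) ∧ ∀ i j, 0 ≤ (1 - A)⁻¹ i j := by
  let _ := Matrix.linftyOpNormedRing (n := ι) (α := ℝ)
  let _ := Matrix.linftyOpNormedAlgebra (n := ι) (R := ℝ) (α := ℝ)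
  have hnorm : ‖A‖ < 1 := by
    rw [← NNReal.coe_one, linfty_opNorm_def, NNReal.coe_lt_coe,
      Finset.sup_lt_iff zero_lt_one]
    intro i _
    rw [← NNReal.coe_lt_coe]
    push_cast
    simpa only [Real.norm_of_nonneg (hA0 i _)] using hA i
  refine ⟨isUnit_one_sub_of_norm_lt_one hnorm, fun i j => ?_⟩
  have hsum := hasSum_geom_series_inverse A hnorm
  rw [← nonsing_inv_eq_ringInverse] at hsum
  exact (Pi.hasSum.mp (Pi.hasSum.mp hsum i) j).nonneg fun k => pow_apply_nonneg hA0 k i j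

theorem isUnit_one_sub_and_inv_nonneg_of_sum_col_lt_one {A : Matrix ι ι ℝ}
    (hA0 : ∀ i j, 0 ≤ A i j) (hA : ∀ j, ∑ i, A i j < 1) :
    IsUnit (1 - A) ∧ ∀ i j, 0 ≤ (1 - A)⁻¹ i j := by
  obtain ⟨hunit, hinv⟩ :=
    isUnit_one_sub_and_inv_nonneg_of_sum_row_lt_one (A := Aᵀ) (fun i j => hA0 j i) hA
  rw [← transpose_one, ← transpose_sub] at hunit hinv
  refine ⟨(isUnit_transpose _).mp hunit, fun i j => ?_⟩
  simpa only [← transpose_nonsing_inv, transpose_apply] using hinv j i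

end Matrix

theorem sum_kronVecId_apply {n : ℕ} (u : Fin n → ℝ) (k : Fin n) :
    ∑ p, kronVecId u p k = ∑ i, u i := by
  simp [kronVecId, Fintype.sum_prod_type]

theorem sum_idKronVec_apply {n : ℕ} (u : Fin n → ℝ) (k : Fin n) :
    ∑ p, idKronVec u p k = ∑ i, u i := by
  simp [idKronVec, Fintype.sum_prod_type]

theorem stmt0_general {n : ℕ} (α : ℝ) (hα0 : 0 < α) (hα : α < 1 / 2)
    (R : Matrix (Fin n) (Fin n × Fin n) ℝ) (hR0 : ∀ i p, 0 ≤ R i p)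
    (hRcol : ∀ p, ∑ i, R i p = 1)
    (x : Fin n → ℝ) (hx0 : 0 ≤ x) (hx1 : ∑ i, x i ≤ 1) :
    IsUnit (Fprime α R x) ∧ ∀ i j, 0 ≤ (Fprime α R x)⁻¹ i j := by
  set K := kronVecId x + idKronVec x
  have hK0 : ∀ p k, 0 ≤ K p k := fun p k => by
    have : 0 ≤ x p.1 := hx0 p.1
    have : 0 ≤ x p.2 := hx0 p.2
    simp only [K, Matrix.add_apply, kronVecId, idKronVec, of_apply]
    split_ifs <;> positivity
  have hB0 : ∀ i k, 0 ≤ (α • (R * K)) i k := fun i k =>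
    mul_nonneg hα0.le (sum_nonneg fun p _ => mul_nonneg (hR0 i p) (hK0 p k))
  have hBcol : ∀ k, ∑ i, (α • (R * K)) i k < 1 := fun k => by
    simp only [Matrix.smul_apply, smul_eq_mul, ← mul_sum, sum_mul_apply_of_sum_col_eq_one hRcol,
      K, Matrix.add_apply, sum_add_distrib, sum_kronVecId_apply, sum_idKronVec_apply]
    nlinarith
  exact isUnit_one_sub_and_inv_nonneg_of_sum_col_lt_one hB0 hBcol

theorem stmt0 {n : ℕ} (hn : 1 ≤ n) (α : ℝ) (hα0 : 0 < α) (hα : α < 1 / 2)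
    (R : Matrix (Fin n) (Fin n × Fin n) ℝ) (hR0 : ∀ i p, 0 ≤ R i p)
    (hRcol : ∀ p, ∑ i, R i p = 1)
    (v : Fin n → ℝ) (hv0 : 0 ≤ v) (hv1 : ∑ i, v i = 1)
    (x : Fin n → ℝ) (hx0 : 0 ≤ x) (hx1 : ∑ i, x i ≤ 1) :
    IsUnit (Fprime α R x) ∧ ∀ i j, 0 ≤ (Fprime α R x)⁻¹ i j :=
  stmt0_general α hα0 hα R hR0 hRcol x hx0 hx1
end
end

section
/- If z, x ∈ ℝⁿ satisfy 0 ≤ z ≤ x entrywise and eᵀx ≤ 1, then both matrices F'_z = I − αR(z ⊗ I + I ⊗ z) and F'ₓ = I − αR(x ⊗ I + I ⊗ x) are invertible with entrywise nonnegative inverses, and 0 ≤ (F'_z)⁻¹ ≤ (F'ₓ)⁻¹ entrywise. -/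
open Matrix BigOperators Finset Filter

noncomputable section

attribute [local instance] Matrix.linftyOpNormedAddCommGroup Matrix.linftyOpNormedRing
  Matrix.linftyOpNormedAlgebra

namespace Stmt2Aux

variable {n : ℕ}

lemma norm_le_of_rows (D : Matrix (Fin n) (Fin n) ℝ) (c : ℝ) (hc0 : 0 ≤ c)
    (h : ∀ i, ∑ j, |D i j| ≤ c) : ‖D‖ ≤ c := by
  rw [Matrix.linfty_opNorm_def]
  have hsup : (Finset.univ.sup fun i => ∑ j, ‖D i j‖₊) ≤ c.toNNReal := by
    apply Finset.sup_le
    intro i _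
    rw [← NNReal.coe_le_coe]
    push_cast
    simpa [Real.norm_eq_abs, Real.coe_toNNReal c hc0] using h i
  calc ((Finset.univ.sup fun i => ∑ j, ‖D i j‖₊ : NNReal) : ℝ)
      ≤ (c.toNNReal : ℝ) := NNReal.coe_le_coe.mpr hsup
    _ = c := Real.coe_toNNReal c hc0

lemma neumann (C D : Matrix (Fin n) (Fin n) ℝ) (hC0 : ∀ i j, 0 ≤ C i j)
    (hCD : ∀ i j, C i j ≤ D i j) (hC : ‖C‖ < 1) (hD : ‖D‖ < 1) :
    IsUnit (1 - C) ∧ IsUnit (1 - D) ∧ (∀ i j, 0 ≤ (1 - C)⁻¹ i j) ∧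
    (∀ i j, 0 ≤ (1 - D)⁻¹ i j) ∧ (∀ i j, (1 - C)⁻¹ i j ≤ (1 - D)⁻¹ i j) := by
  haveI : CompleteSpace (Matrix (Fin n) (Fin n) ℝ) := FiniteDimensional.complete ℝ _
  have hD0 : ∀ i j, 0 ≤ D i j := fun i j => le_trans (hC0 i j) (hCD i j)
  have hpow : ∀ k : ℕ, (∀ i j, 0 ≤ (C ^ k) i j) ∧ (∀ i j, 0 ≤ (D ^ k) i j) ∧
      (∀ i j, (C ^ k) i j ≤ (D ^ k) i j) := by
    intro k
    induction k with
    | zero =>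
      refine ⟨fun i j => ?_, fun i j => ?_, fun i j => le_refl _⟩ <;>
        · simp only [pow_zero, Matrix.one_apply]
          positivity
    | succ k ih =>
      obtain ⟨ih1, ih2, ih3⟩ := ih
      refine ⟨fun i j => ?_, fun i j => ?_, fun i j => ?_⟩
      · rw [pow_succ, Matrix.mul_apply]
        exact Finset.sum_nonneg fun l _ => mul_nonneg (ih1 i l) (hC0 l j)
      · rw [pow_succ, Matrix.mul_apply]
        exact Finset.sum_nonneg fun l _ => mul_nonneg (ih2 i l) (hD0 l j)
      · rw [pow_succ, pow_succ, Matrix.mul_apply, Matrix.mul_apply]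
        exact Finset.sum_le_sum fun l _ =>
          mul_le_mul (ih3 i l) (hCD l j) (hC0 l j) (le_trans (ih1 i l) (ih3 i l))
  have hSC : HasSum (fun k : ℕ => C ^ k) (Ring.inverse (1 - C)) :=
    hasSum_geom_series_inverse C hC
  have hSD : HasSum (fun k : ℕ => D ^ k) (Ring.inverse (1 - D)) :=
    hasSum_geom_series_inverse D hD
  have hinvC : (1 - C)⁻¹ = Ring.inverse (1 - C) := Matrix.nonsing_inv_eq_ringInverse _
  have hinvD : (1 - D)⁻¹ = Ring.inverse (1 - D) := Matrix.nonsing_inv_eq_ringInverse _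
  have entry : ∀ i j, ∃ φ : Matrix (Fin n) (Fin n) ℝ →L[ℝ] ℝ, ∀ A, φ A = A i j := by
    intro i j
    refine ⟨LinearMap.toContinuousLinearMap
      { toFun := fun A => A i j,
        map_add' := fun _ _ => rfl,
        map_smul' := fun _ _ => rfl }, fun A => rfl⟩
  have key : ∀ i j, 0 ≤ (1 - C)⁻¹ i j ∧ 0 ≤ (1 - D)⁻¹ i j ∧
      (1 - C)⁻¹ i j ≤ (1 - D)⁻¹ i j := by
    intro i j
    obtain ⟨φ, hφ⟩ := entry i j
    have hC' : HasSum (fun k : ℕ => (C ^ k) i j) ((1 - C)⁻¹ i j) := by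
      have := hSC.mapL φ
      simpa [hφ, hinvC] using this
    have hD' : HasSum (fun k : ℕ => (D ^ k) i j) ((1 - D)⁻¹ i j) := by
      have := hSD.mapL φ
      simpa [hφ, hinvD] using this
    exact ⟨hasSum_le (fun k => (hpow k).1 i j) hasSum_zero hC',
      hasSum_le (fun k => (hpow k).2.1 i j) hasSum_zero hD',
      hasSum_le (fun k => (hpow k).2.2 i j) hC' hD'⟩
  exact ⟨isUnit_one_sub_of_norm_lt_one hC, isUnit_one_sub_of_norm_lt_one hD,
    fun i j => (key i j).1, fun i j => (key i j).2.1, fun i j => (key i j).2.2⟩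

/-- Column sums of `α • (R * (kronVecId u + idKronVec u))`. -/
lemma colsum {α : ℝ} {R : Matrix (Fin n) (Fin n × Fin n) ℝ}
    (hRcol : ∀ p, ∑ i, R i p = 1) (u : Fin n → ℝ) (i : Fin n) :
    ∑ j, (α • (R * (kronVecId u + idKronVec u))) j i = α * (2 * ∑ a, u a) := by
  simp only [Matrix.smul_apply, smul_eq_mul, Matrix.mul_apply]
  rw [← Finset.mul_sum, Finset.sum_comm]
  simp_rw [← Finset.sum_mul, hRcol, one_mul]
  rw [Fintype.sum_prod_type]
  simp only [kronVecId, idKronVec, Matrix.add_apply, Matrix.of_apply]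
  simp [Finset.sum_add_distrib, mul_ite, ite_mul, Finset.sum_ite_eq',
    ← Finset.mul_sum]
  ring_nf
  exact Or.inl trivial

end Stmt2Aux

theorem stmt2 {n : ℕ} (hn : 1 ≤ n) (α : ℝ) (hα0 : 0 < α) (hα : α < 1 / 2)
    (R : Matrix (Fin n) (Fin n × Fin n) ℝ) (hR0 : ∀ i p, 0 ≤ R i p)
    (hRcol : ∀ p, ∑ i, R i p = 1)
    (v : Fin n → ℝ) (hv0 : 0 ≤ v) (hv1 : ∑ i, v i = 1)
    (z x : Fin n → ℝ) (hz0 : 0 ≤ z) (hzx : z ≤ x) (hx1 : ∑ i, x i ≤ 1) :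
    IsUnit (Fprime α R z) ∧ IsUnit (Fprime α R x) ∧
    (∀ i j, 0 ≤ (Fprime α R z)⁻¹ i j) ∧ (∀ i j, 0 ≤ (Fprime α R x)⁻¹ i j) ∧
    (∀ i j, (Fprime α R z)⁻¹ i j ≤ (Fprime α R x)⁻¹ i j) := by
  have hx0 : 0 ≤ x := le_trans hz0 hzx
  set Bz := α • (R * (kronVecId z + idKronVec z)) with hBz
  set Bx := α • (R * (kronVecId x + idKronVec x)) with hBx
  have hFz : Fprime α R z = 1 - Bz := rfl
  have hFx : Fprime α R x = 1 - Bx := rfl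
  -- entrywise nonnegativity and monotonicity
  have hBentry : ∀ (u : Fin n → ℝ) i j, (α • (R * (kronVecId u + idKronVec u))) i j
      = α * ∑ p, R i p * (u p.1 * (if p.2 = j then (1:ℝ) else 0)
          + (if p.1 = j then (1:ℝ) else 0) * u p.2) := by
    intro u i j
    simp [Matrix.mul_apply, kronVecId, idKronVec]
  have hM0 : ∀ (u : Fin n → ℝ), 0 ≤ u → ∀ (p : Fin n × Fin n) (j : Fin n),
      (0:ℝ) ≤ u p.1 * (if p.2 = j then (1:ℝ) else 0)
        + (if p.1 = j then (1:ℝ) else 0) * u p.2 := by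
    intro u hu p j
    exact add_nonneg (mul_nonneg (hu p.1) (by positivity))
      (mul_nonneg (by positivity) (hu p.2))
  have hBz0 : ∀ i j, 0 ≤ Bz i j := by
    intro i j
    rw [hBz, hBentry]
    exact mul_nonneg hα0.le (Finset.sum_nonneg fun p _ =>
      mul_nonneg (hR0 i p) (hM0 z hz0 p j))
  have hBzx : ∀ i j, Bz i j ≤ Bx i j := by
    intro i j
    rw [hBz, hBx, hBentry, hBentry]
    apply mul_le_mul_of_nonneg_left _ hα0.le
    apply Finset.sum_le_sum
    intro p _
    apply mul_le_mul_of_nonneg_left _ (hR0 i p)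
    have h1 := hzx p.1
    have h2 := hzx p.2
    rcases le_or_gt 0 (if p.2 = j then (1:ℝ) else 0) with hi1 | hi1
    · rcases le_or_gt 0 (if p.1 = j then (1:ℝ) else 0) with hi2 | hi2
      · exact add_le_add (mul_le_mul_of_nonneg_right h1 hi1)
          (mul_le_mul_of_nonneg_left h2 hi2)
      · exact absurd hi2 (not_lt.mpr (by positivity))
    · exact absurd hi1 (not_lt.mpr (by positivity))
  have hBx0 : ∀ i j, 0 ≤ Bx i j := fun i j => le_trans (hBz0 i j) (hBzx i j)
  -- norms of transposes
  have hz1 : ∑ a, z a ≤ 1 := le_trans (Finset.sum_le_sum fun a _ => hzx a) hx1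
  have hznn : (0:ℝ) ≤ ∑ a, z a := Finset.sum_nonneg fun a _ => hz0 a
  have hxnn : (0:ℝ) ≤ ∑ a, x a := Finset.sum_nonneg fun a _ => hx0 a
  have hnorm : ∀ (u : Fin n → ℝ), 0 ≤ u → (∑ a, u a) ≤ 1 →
      ‖(α • (R * (kronVecId u + idKronVec u)))ᵀ‖ < 1 := by
    intro u hu hu1
    have hunn : (0:ℝ) ≤ ∑ a, u a := Finset.sum_nonneg fun a _ => hu a
    have hB0 : ∀ i j, 0 ≤ (α • (R * (kronVecId u + idKronVec u))) i j := by
      intro i j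
      rw [hBentry]
      exact mul_nonneg hα0.le (Finset.sum_nonneg fun p _ =>
        mul_nonneg (hR0 i p) (hM0 u hu p j))
    have hle : ‖(α • (R * (kronVecId u + idKronVec u)))ᵀ‖ ≤ 2 * α := by
      apply Stmt2Aux.norm_le_of_rows _ _ (by linarith)
      intro i
      have : ∀ j, |(α • (R * (kronVecId u + idKronVec u)))ᵀ i j|
          = (α • (R * (kronVecId u + idKronVec u))) j i := by
        intro j
        rw [Matrix.transpose_apply, abs_of_nonneg (hB0 j i)]
      simp_rw [this]
      rw [Stmt2Aux.colsum hRcol u i]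
      nlinarith
    linarith
  have hnz := hnorm z hz0 hz1
  have hnx := hnorm x hx0 hx1
  obtain ⟨hu1, hu2, h1, h2, h3⟩ := Stmt2Aux.neumann Bzᵀ Bxᵀ
    (fun i j => hBz0 j i) (fun i j => hBzx j i) hnz hnx
  have hT : ∀ (B : Matrix (Fin n) (Fin n) ℝ), (1 : Matrix (Fin n) (Fin n) ℝ) - Bᵀ = (1 - B)ᵀ := by
    intro B
    rw [Matrix.transpose_sub, Matrix.transpose_one]
  have hUz : IsUnit (Fprime α R z) := by
    rw [hFz, Matrix.isUnit_iff_isUnit_det, ← Matrix.det_transpose, ← hT,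
      ← Matrix.isUnit_iff_isUnit_det]
    exact hu1
  have hUx : IsUnit (Fprime α R x) := by
    rw [hFx, Matrix.isUnit_iff_isUnit_det, ← Matrix.det_transpose, ← hT,
      ← Matrix.isUnit_iff_isUnit_det]
    exact hu2
  have hIz : ∀ i j, (Fprime α R z)⁻¹ i j = (1 - Bzᵀ)⁻¹ j i := by
    intro i j
    rw [hFz, hT, ← Matrix.transpose_nonsing_inv, Matrix.transpose_apply]
  have hIx : ∀ i j, (Fprime α R x)⁻¹ i j = (1 - Bxᵀ)⁻¹ j i := by
    intro i j
    rw [hFx, hT, ← Matrix.transpose_nonsing_inv, Matrix.transpose_apply]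
  refine ⟨hUz, hUx, fun i j => ?_, fun i j => ?_, fun i j => ?_⟩
  · rw [hIz]; exact h1 j i
  · rw [hIx]; exact h2 j i
  · rw [hIz, hIx]; exact h3 j i
end
end

section
/- Suppose x ∈ ℝⁿ satisfies F(x) ≤ 0 entrywise, 0 ≤ x entrywise, and eᵀx ≤ 1, and let y = x − (F'ₓ)⁻¹F(x). Then F(y) = −αR((y − x) ⊗ (y − x)); in particular F(y) ≤ 0 entrywise. -/
open Matrix BigOperators Finset Filter

noncomputable section

lemma sign_lemma {n : ℕ} (A : Matrix (Fin n) (Fin n) ℝ) (hA : ∀ i j, 0 ≤ A i j)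
    (c : ℝ) (hc : c < 1) (hcol : ∀ j, ∑ k, A k j ≤ c)
    (d b : Fin n → ℝ) (hb : 0 ≤ b) (heq : d = A.mulVec d + b) : 0 ≤ d := by
  set S : Finset (Fin n) := Finset.univ.filter (fun j => d j < 0) with hS
  by_cases hne : S.Nonempty
  · exfalso
    set t : ℝ := ∑ k ∈ S, d k with ht
    have htneg : t < 0 := Finset.sum_neg (fun k hk => (Finset.mem_filter.mp hk).2) hne
    have step1 : ∀ k ∈ S, ∑ j ∈ S, A k j * d j ≤ d k := by
      intro k hk
      have h1 : d k = ∑ j, A k j * d j + b k := by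
        have := congrFun heq k
        simpa [Matrix.mulVec, dotProduct] using this
      have h2 : ∑ j ∈ S, A k j * d j ≤ ∑ j, A k j * d j := by
        apply Finset.sum_le_sum_of_subset_of_nonneg (Finset.subset_univ S)
        intro j _ hj
        have : 0 ≤ d j := by
          by_contra h
          exact hj (Finset.mem_filter.mpr ⟨Finset.mem_univ j, not_le.mp h⟩)
        exact mul_nonneg (hA k j) this
      have hbk : (0:ℝ) ≤ b k := hb k
      linarith
    have step2 : c * t ≤ t := by
      have h3 : ∑ k ∈ S, ∑ j ∈ S, A k j * d j ≤ t := Finset.sum_le_sum step1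
      have h4 : ∑ j ∈ S, c * d j ≤ ∑ j ∈ S, (∑ k ∈ S, A k j) * d j := by
        apply Finset.sum_le_sum
        intro j hj
        have hdj : d j ≤ 0 := le_of_lt (Finset.mem_filter.mp hj).2
        have hsub : ∑ k ∈ S, A k j ≤ c := by
          refine le_trans ?_ (hcol j)
          apply Finset.sum_le_sum_of_subset_of_nonneg (Finset.subset_univ S)
          intro k _ _; exact hA k j
        exact mul_le_mul_of_nonpos_right hsub hdj
      rw [Finset.sum_comm] at h3
      simp_rw [← Finset.sum_mul] at h3
      calc c * t = ∑ j ∈ S, c * d j := by rw [ht, Finset.mul_sum]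
        _ ≤ _ := le_trans h4 h3
    nlinarith
  · intro j
    by_contra h
    exact hne ⟨j, Finset.mem_filter.mpr ⟨Finset.mem_univ j, not_le.mp h⟩⟩

theorem stmt5 {n : ℕ} (hn : 1 ≤ n) (α : ℝ) (hα0 : 0 < α) (hα : α < 1 / 2)
    (R : Matrix (Fin n) (Fin n × Fin n) ℝ) (hR0 : ∀ i p, 0 ≤ R i p)
    (hRcol : ∀ p, ∑ i, R i p = 1)
    (v : Fin n → ℝ) (hv0 : 0 ≤ v) (hv1 : ∑ i, v i = 1)
    (x : Fin n → ℝ) (hFx : Fmap α R v x ≤ 0) (hx0 : 0 ≤ x) (hx1 : ∑ i, x i ≤ 1)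
    (y : Fin n → ℝ) (hy : y = x - (Fprime α R x)⁻¹.mulVec (Fmap α R v x)) :
    Fmap α R v y = -(α • R.mulVec (kron (y - x) (y - x))) ∧ Fmap α R v y ≤ 0 := by
  set K : Matrix (Fin n × Fin n) (Fin n) ℝ := kronVecId x + idKronVec x with hK
  set A : Matrix (Fin n) (Fin n) ℝ := α • (R * K) with hAdef
  have hFp : Fprime α R x = 1 - A := rfl
  have hx0' : ∀ i, 0 ≤ x i := fun i => hx0 i
  -- entries of A are nonnegative
  have hA0 : ∀ i j, 0 ≤ A i j := by
    intro i j
    apply mul_nonneg (le_of_lt hα0)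
    apply Finset.sum_nonneg
    intro p _
    apply mul_nonneg (hR0 i p)
    have h1 : (0:ℝ) ≤ kronVecId x p j := by
      simp only [kronVecId, Matrix.of_apply]
      apply mul_nonneg (hx0' _)
      split <;> norm_num
    have h2 : (0:ℝ) ≤ idKronVec x p j := by
      simp only [idKronVec, Matrix.of_apply]
      apply mul_nonneg _ (hx0' _)
      split <;> norm_num
    simpa [hK] using add_nonneg h1 h2
  -- column sums of A are ≤ 2α
  have hxsum0 : (0:ℝ) ≤ ∑ i, x i := Finset.sum_nonneg fun i _ => hx0' i
  have hcolK : ∀ j, ∑ p : Fin n × Fin n, K p j = 2 * ∑ i, x i := by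
    intro j
    have : ∀ p : Fin n × Fin n, K p j =
        x p.1 * (if p.2 = j then (1:ℝ) else 0) + (if p.1 = j then (1:ℝ) else 0) * x p.2 := by
      intro p; rfl
    simp_rw [this]
    rw [Finset.sum_add_distrib, Fintype.sum_prod_type, Fintype.sum_prod_type]
    simp [Finset.mul_sum]
    simp [two_mul, Finset.sum_add_distrib]
  have hcol : ∀ j, ∑ k, A k j ≤ 2 * α := by
    intro j
    have h1 : ∑ k, A k j = α * ∑ p : Fin n × Fin n, K p j := by
      have : ∀ k, A k j = α * ∑ p, R k p * K p j := fun k => rfl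
      simp_rw [this, ← Finset.mul_sum]
      congr 1
      rw [Finset.sum_comm]
      have : ∀ p : Fin n × Fin n, ∑ k, R k p * K p j = K p j := by
        intro p
        rw [← Finset.sum_mul, hRcol p, one_mul]
      simp_rw [this]
    rw [h1, hcolK j]
    have : α * (2 * ∑ i, x i) ≤ α * 2 := by
      apply mul_le_mul_of_nonneg_left _ (le_of_lt hα0)
      linarith
    linarith
  have hc : (2:ℝ) * α < 1 := by linarith
  -- kernel of Fprime is trivial, hence det is a unit
  have hker : ∀ w, (Fprime α R x).mulVec w = 0 → w = 0 := by
    intro w hw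
    have hw' : w = A.mulVec w + 0 := by
      have : w - A.mulVec w = 0 := by
        rw [hFp] at hw
        rwa [Matrix.sub_mulVec, Matrix.one_mulVec] at hw
      rw [add_zero]
      exact sub_eq_zero.mp this
    have hw'' : -w = A.mulVec (-w) + 0 := by
      rw [Matrix.mulVec_neg]
      simp only [add_zero] at hw' ⊢
      rw [← hw']
    have h1 : 0 ≤ w := sign_lemma A hA0 (2*α) hc hcol w 0 le_rfl hw'
    have h2 : 0 ≤ -w := sign_lemma A hA0 (2*α) hc hcol (-w) 0 le_rfl hw''
    funext i
    have := h1 i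
    have := h2 i
    simp only [Pi.neg_apply, Pi.zero_apply] at *
    linarith
  have hdet : IsUnit (Fprime α R x).det := by
    rw [isUnit_iff_ne_zero]
    intro h
    obtain ⟨w, hw0, hw⟩ := (Matrix.exists_mulVec_eq_zero_iff).mpr h
    exact hw0 (hker w hw)
  -- d := y - x
  set d : Fin n → ℝ := y - x with hd
  have hdval : d = -(Fprime α R x)⁻¹.mulVec (Fmap α R v x) := by
    rw [hd, hy]; funext i; simp
  have hFpd : (Fprime α R x).mulVec d = -(Fmap α R v x) := by
    rw [hdval, Matrix.mulVec_neg, Matrix.mulVec_mulVec, Matrix.mul_nonsing_inv _ hdet,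
      Matrix.one_mulVec]
  -- d ≥ 0
  have hd0 : 0 ≤ d := by
    apply sign_lemma A hA0 (2*α) hc hcol d (-(Fmap α R v x))
    · intro i
      simpa using hFx i
    · have h : d - A.mulVec d = -(Fmap α R v x) := by
        rw [hFp, Matrix.sub_mulVec, Matrix.one_mulVec] at hFpd
        exact hFpd
      rw [← h]
      abel
  -- algebraic expansion
  have hyd : y = x + d := by rw [hd]; abel
  have hkron : kron y y = kron x x + (kron x d + kron d x + kron d d) := by
    funext p
    simp only [kron, hyd, Pi.add_apply]
    ring
  have hKd : K.mulVec d = kron x d + kron d x := by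
    funext p
    simp [Matrix.mulVec, dotProduct, hK, kronVecId, idKronVec, kron, add_mul, ite_mul, mul_ite,
      Finset.sum_add_distrib]
    ring
  have hexp : Fmap α R v y = Fmap α R v x + (Fprime α R x).mulVec d - α • R.mulVec (kron d d) := by
    have h2 : R.mulVec (kron x d + kron d x) = (R * K).mulVec d := by
      rw [← hKd, Matrix.mulVec_mulVec]
    have h3 : (Fprime α R x).mulVec d = d - α • (R * K).mulVec d := by
      rw [hFp, Matrix.sub_mulVec, Matrix.one_mulVec, hAdef, Matrix.smul_mulVec]
    simp only [Fmap]
    rw [hkron, Matrix.mulVec_add, Matrix.mulVec_add, h2, h3, hyd]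
    simp only [smul_add, smul_sub]
    abel
  have key : Fmap α R v y = -(α • R.mulVec (kron d d)) := by
    rw [hexp, hFpd]
    abel
  refine ⟨key, ?_⟩
  rw [key]
  intro i
  simp only [Pi.neg_apply, Pi.smul_apply, Pi.zero_apply, smul_eq_mul]
  rw [neg_nonpos]
  apply mul_nonneg hα0.le
  have : (R.mulVec (kron d d)) i = ∑ p, R i p * (d p.1 * d p.2) := by
    simp [Matrix.mulVec, dotProduct, kron]
  rw [this]
  apply Finset.sum_nonneg
  intro p _
  exact mul_nonneg (hR0 i p) (mul_nonneg (hd0 p.1) (hd0 p.2))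
end
end

section
/- Suppose x ∈ ℝⁿ satisfies F(x) ≤ 0 entrywise, 0 ≤ x entrywise, and eᵀx ≤ 1, and let y = x − (F'ₓ)⁻¹F(x). Then x ≤ y entrywise. -/
open Matrix BigOperators Finset Filter

noncomputable section

lemma sign_lemma' {n : ℕ} (A : Matrix (Fin n) (Fin n) ℝ) (hA : ∀ i j, 0 ≤ A i j)
    (hrow : ∀ i, ∑ j, A i j < 1) (u d : Fin n → ℝ)
    (h : (1 - A).mulVec u = d) (hd : 0 ≤ d) : 0 ≤ u := by
  by_contra hneg
  simp only [Pi.le_def, not_forall, not_le] at hneg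
  obtain ⟨k0, hk0⟩ := hneg
  obtain ⟨k, -, hkmin⟩ := Finset.exists_min_image Finset.univ u ⟨k0, Finset.mem_univ k0⟩
  have hm : u k < 0 := lt_of_le_of_lt (hkmin k0 (Finset.mem_univ k0)) hk0
  have h1 : u - A.mulVec u = d := by
    rw [← h, Matrix.sub_mulVec, Matrix.one_mulVec]
  have h2 : u k - (A.mulVec u) k = d k := congrFun h1 k
  have h3 : (∑ j, A k j) * u k ≤ (A.mulVec u) k := by
    rw [Matrix.mulVec, dotProduct, Finset.sum_mul]
    exact Finset.sum_le_sum fun j _ =>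
      mul_le_mul_of_nonneg_left (hkmin j (Finset.mem_univ j)) (hA k j)
  have h4 : 1 * u k < (∑ j, A k j) * u k := mul_lt_mul_of_neg_right (hrow k) hm
  have := hd k
  simp only [Pi.zero_apply] at this
  linarith

theorem stmt6 {n : ℕ} (hn : 1 ≤ n) (α : ℝ) (hα0 : 0 < α) (hα : α < 1 / 2)
    (R : Matrix (Fin n) (Fin n × Fin n) ℝ) (hR0 : ∀ i p, 0 ≤ R i p)
    (hRcol : ∀ p, ∑ i, R i p = 1)
    (v : Fin n → ℝ) (hv0 : 0 ≤ v) (hv1 : ∑ i, v i = 1)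
    (x : Fin n → ℝ) (hFx : Fmap α R v x ≤ 0) (hx0 : 0 ≤ x) (hx1 : ∑ i, x i ≤ 1)
    (y : Fin n → ℝ) (hy : y = x - (Fprime α R x)⁻¹.mulVec (Fmap α R v x)) :
    x ≤ y := by
  set A : Matrix (Fin n) (Fin n) ℝ := α • (R * (kronVecId x + idKronVec x)) with hAdef
  have hB : Fprime α R x = 1 - A := rfl
  -- entries of A are nonnegative
  have hA0 : ∀ i j, 0 ≤ A i j := by
    intro i j
    apply mul_nonneg hα0.le
    apply Finset.sum_nonneg
    intro p _
    apply mul_nonneg (hR0 i p)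
    simp only [kronVecId, idKronVec, Matrix.add_apply, Matrix.of_apply]
    have h1 := hx0 p.1
    have h2 := hx0 p.2
    apply add_nonneg (mul_nonneg h1 (by positivity)) (mul_nonneg (by positivity) h2)
  -- column sums of A are < 1
  have hcol : ∀ j, ∑ i, A i j < 1 := by
    intro j
    have key : ∑ i, A i j = α * (2 * ∑ i, x i) := by
      simp only [hAdef, Matrix.smul_apply, Matrix.mul_apply, smul_eq_mul]
      rw [← Finset.mul_sum]
      congr 1
      rw [Finset.sum_comm]
      have : ∀ p, ∑ i, R i p * (kronVecId x + idKronVec x) p j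
          = (kronVecId x + idKronVec x) p j := by
        intro p
        rw [← Finset.sum_mul, hRcol, one_mul]
      rw [Finset.sum_congr rfl fun p _ => this p]
      simp only [kronVecId, idKronVec, Matrix.add_apply, Matrix.of_apply]
      rw [Finset.sum_add_distrib, Fintype.sum_prod_type]
      have e1 : ∑ a : Fin n, ∑ b : Fin n,
          x a * (if b = j then (1:ℝ) else 0) = ∑ a, x a := by
        simp
      have e2 : ∑ p : Fin n × Fin n,
          (if p.1 = j then (1:ℝ) else 0) * x p.2 = ∑ a, x a := by
        rw [Fintype.sum_prod_type]
        simp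
      rw [e1, e2]; ring
    rw [key]
    have hs0 : 0 ≤ ∑ i, x i := Finset.sum_nonneg fun i _ => hx0 i
    nlinarith
  by_cases hdet : IsUnit (Fprime α R x).det
  · -- entries of (Fprime)⁻¹ are nonnegative
    have hinv0 : ∀ i j, 0 ≤ (Fprime α R x)⁻¹ i j := by
      intro i j
      have hdetT : IsUnit ((Fprime α R x)ᵀ).det := by rwa [Matrix.det_transpose]
      set w : Fin n → ℝ := ((Fprime α R x)ᵀ)⁻¹.mulVec (Pi.single i 1) with hw
      have hsolve : (1 - Aᵀ).mulVec w = Pi.single i 1 := by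
        have hT : (1 - Aᵀ) = (Fprime α R x)ᵀ := by
          rw [hB, Matrix.transpose_sub, Matrix.transpose_one]
        rw [hT, hw, Matrix.mulVec_mulVec, Matrix.mul_nonsing_inv _ hdetT,
          Matrix.one_mulVec]
      have hw0 : 0 ≤ w := by
        refine sign_lemma' Aᵀ (fun a b => hA0 b a) (fun a => ?_) w _ hsolve ?_
        · simpa [Matrix.transpose_apply] using hcol a
        · intro k
          by_cases h : k = i <;> simp [Pi.single_apply, h]
      have hwj : w j = (Fprime α R x)⁻¹ i j := by
        rw [hw, ← Matrix.transpose_nonsing_inv]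
        simp [Matrix.mulVec, dotProduct, Pi.single_apply]
      rw [← hwj]; exact hw0 j
    intro i
    rw [hy]
    simp only [Pi.sub_apply, le_sub_self_iff]
    rw [Matrix.mulVec, dotProduct]
    apply Finset.sum_nonpos
    intro j _
    exact mul_nonpos_of_nonneg_of_nonpos (hinv0 i j) (hFx j)
  · rw [hy, Matrix.nonsing_inv_apply_not_isUnit _ hdet]
    simp
end
end

section
/- Suppose x ∈ ℝⁿ satisfies F(x) ≤ 0 entrywise, 0 ≤ x entrywise, and eᵀx ≤ 1, and let y = x − (F'ₓ)⁻¹F(x). Then eᵀy ≤ 1. -/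
open Matrix BigOperators Finset Filter

noncomputable section

theorem stmt8 {n : ℕ} (hn : 1 ≤ n) (α : ℝ) (hα0 : 0 < α) (hα : α < 1 / 2)
    (R : Matrix (Fin n) (Fin n × Fin n) ℝ) (hR0 : ∀ i p, 0 ≤ R i p)
    (hRcol : ∀ p, ∑ i, R i p = 1)
    (v : Fin n → ℝ) (hv0 : 0 ≤ v) (hv1 : ∑ i, v i = 1)
    (x : Fin n → ℝ) (hFx : Fmap α R v x ≤ 0) (hx0 : 0 ≤ x) (hx1 : ∑ i, x i ≤ 1)
    (y : Fin n → ℝ) (hy : y = x - (Fprime α R x)⁻¹.mulVec (Fmap α R v x)) :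
    ∑ i, y i ≤ 1 := by
  set s := ∑ i, x i with hs
  have hs0 : 0 ≤ s := Finset.sum_nonneg fun i _ => hx0 i
  have hden : 0 < 1 - 2*α*s := by nlinarith
  have hcol : ∀ k, ∑ i, Fprime α R x i k = 1 - 2*α*s := by
    intro k
    simp only [Fprime, Matrix.sub_apply, Matrix.smul_apply, Matrix.one_apply,
      Matrix.mul_apply, smul_eq_mul]
    rw [Finset.sum_sub_distrib]
    have h1 : ∑ i, (if i = k then (1:ℝ) else 0) = 1 := by simp
    rw [h1]
    have h2 : ∑ i, α * ∑ p, R i p * (kronVecId x + idKronVec x) p k = 2*α*s := by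
      rw [← Finset.mul_sum, Finset.sum_comm]
      have hp : ∀ p : Fin n × Fin n, ∑ i, R i p * (kronVecId x + idKronVec x) p k
          = (kronVecId x + idKronVec x) p k := by
        intro p; rw [← Finset.sum_mul, hRcol, one_mul]
      rw [Finset.sum_congr rfl fun p _ => hp p]
      simp only [Matrix.add_apply, kronVecId, idKronVec, Matrix.of_apply]
      rw [Fintype.sum_prod_type]
      have inner : ∀ i : Fin n, ∑ j : Fin n, (x i * (if j = k then (1:ℝ) else 0)
          + (if i = k then (1:ℝ) else 0) * x j) = x i + (if i = k then s else 0) := by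
        intro i
        rw [Finset.sum_add_distrib]
        congr 1
        · simp
        · split_ifs <;> simp [hs]
      rw [Finset.sum_congr rfl fun i _ => inner i, Finset.sum_add_distrib, ← hs,
        Finset.sum_ite_eq' Finset.univ k fun _ => s]
      simp only [Finset.mem_univ, if_true]
      ring
    rw [h2]
  have hFsum : ∑ j, Fmap α R v x j = s - α*s*s - (1-α) := by
    simp only [Fmap, Pi.sub_apply, Pi.smul_apply, smul_eq_mul]
    rw [Finset.sum_sub_distrib, Finset.sum_sub_distrib, ← Finset.mul_sum, ← Finset.mul_sum, hv1]
    have hm : ∑ j, R.mulVec (kron x x) j = s*s := by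
      simp only [Matrix.mulVec, dotProduct, kron]
      rw [Finset.sum_comm]
      have hp : ∀ p : Fin n × Fin n, ∑ j, R j p * (x p.1 * x p.2) = x p.1 * x p.2 := by
        intro p; rw [← Finset.sum_mul, hRcol, one_mul]
      rw [Finset.sum_congr rfl fun p _ => hp p, Fintype.sum_prod_type]
      rw [← Finset.sum_mul_sum]
    rw [hm]; ring
  by_cases hU : IsUnit (Fprime α R x).det
  · have hmul : Fprime α R x * (Fprime α R x)⁻¹ = 1 := Matrix.mul_nonsing_inv _ hU
    have hinvcol : ∀ k, ∑ i, (Fprime α R x)⁻¹ i k = 1/(1-2*α*s) := by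
      intro k
      have h1 : ∑ i, (Fprime α R x * (Fprime α R x)⁻¹) i k = 1 := by
        rw [hmul]; simp [Matrix.one_apply]
      have h2 : ∑ i, (Fprime α R x * (Fprime α R x)⁻¹) i k
          = (1-2*α*s) * ∑ j, (Fprime α R x)⁻¹ j k := by
        simp only [Matrix.mul_apply]
        rw [Finset.sum_comm, Finset.mul_sum]
        refine Finset.sum_congr rfl fun j _ => ?_
        rw [← Finset.sum_mul, hcol]
      rw [h2] at h1
      field_simp at h1 ⊢
      linarith
    have hmv : ∑ i, (Fprime α R x)⁻¹.mulVec (Fmap α R v x) i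
        = (s - α*s*s - (1-α)) / (1-2*α*s) := by
      simp only [Matrix.mulVec, dotProduct]
      rw [Finset.sum_comm]
      have : ∀ j, ∑ i, (Fprime α R x)⁻¹ i j * Fmap α R v x j
          = (1/(1-2*α*s)) * Fmap α R v x j := by
        intro j; rw [← Finset.sum_mul, hinvcol]
      rw [Finset.sum_congr rfl fun j _ => this j, ← Finset.mul_sum, hFsum]
      ring
    rw [hy]
    simp only [Pi.sub_apply]
    rw [Finset.sum_sub_distrib, ← hs, hmv]
    have key : s - 1 ≤ (s - α*s*s - (1-α)) / (1-2*α*s) := by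
      rw [le_div_iff₀ hden]; nlinarith [sq_nonneg (s-1)]
    linarith
  · rw [hy, Matrix.nonsing_inv_apply_not_isUnit _ hU, Matrix.zero_mulVec]
    simpa using hx1
end
end

section
/- (Monotone Newton step.) Suppose x ∈ ℝⁿ satisfies F(x) ≤ 0 entrywise, 0 ≤ x entrywise, and eᵀx ≤ 1. Then F'ₓ is invertible, and the vector y = x − (F'ₓ)⁻¹F(x) satisfies: (a) F(y) ≤ 0 entrywise; (b) 0 ≤ x ≤ y entrywise and eᵀy ≤ 1. -/
open Matrix BigOperators Finset Filter

noncomputable section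

-- auxiliary lemmas

lemma kronVecId_mulVec {n : ℕ} (u w : Fin n → ℝ) : (kronVecId u).mulVec w = kron u w := by
  funext p
  simp [kronVecId, kron, Matrix.mulVec, dotProduct, ite_mul, mul_ite, mul_assoc]

lemma idKronVec_mulVec {n : ℕ} (u w : Fin n → ℝ) : (idKronVec u).mulVec w = kron w u := by
  funext p
  simp [idKronVec, kron, Matrix.mulVec, dotProduct, ite_mul, mul_ite, mul_comm, mul_assoc]

lemma kron_expand {n : ℕ} (x h : Fin n → ℝ) :
    kron (x + h) (x + h) = kron x x + (kron x h + kron h x) + kron h h := by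
  funext p
  simp only [kron, Pi.add_apply]
  ring

lemma sum_mulVec {n : ℕ} (R : Matrix (Fin n) (Fin n × Fin n) ℝ)
    (hRcol : ∀ p, ∑ i, R i p = 1) (w : Fin n × Fin n → ℝ) :
    ∑ i, R.mulVec w i = ∑ p, w p := by
  simp only [Matrix.mulVec, dotProduct]
  rw [Finset.sum_comm]
  simp [← Finset.sum_mul, hRcol]

lemma sum_kron {n : ℕ} (u w : Fin n → ℝ) :
    ∑ p : Fin n × Fin n, kron u w p = (∑ i, u i) * (∑ i, w i) := by
  rw [Fintype.sum_prod_type, Finset.sum_mul_sum]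
  rfl

theorem stmt9 {n : ℕ} (hn : 1 ≤ n) (α : ℝ) (hα0 : 0 < α) (hα : α < 1 / 2)
    (R : Matrix (Fin n) (Fin n × Fin n) ℝ) (hR0 : ∀ i p, 0 ≤ R i p)
    (hRcol : ∀ p, ∑ i, R i p = 1)
    (v : Fin n → ℝ) (hv0 : 0 ≤ v) (hv1 : ∑ i, v i = 1)
    (x : Fin n → ℝ) (hFx : Fmap α R v x ≤ 0) (hx0 : 0 ≤ x) (hx1 : ∑ i, x i ≤ 1)
    (y : Fin n → ℝ) (hy : y = x - (Fprime α R x)⁻¹.mulVec (Fmap α R v x)) :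
    IsUnit (Fprime α R x) ∧
    Fmap α R v y ≤ 0 ∧ 0 ≤ x ∧ x ≤ y ∧ ∑ i, y i ≤ 1 := by
  classical
  letI : NormedRing (Matrix (Fin n) (Fin n) ℝ) := Matrix.linftyOpNormedRing
  letI : NormedSpace ℝ (Matrix (Fin n) (Fin n) ℝ) := Matrix.linftyOpNormedSpace
  haveI : CompleteSpace (Matrix (Fin n) (Fin n) ℝ) := by infer_instance
  set s : ℝ := ∑ i, x i with hs_def
  have hs0 : 0 ≤ s := Finset.sum_nonneg fun i _ => hx0 i
  set M : Matrix (Fin n) (Fin n) ℝ := α • (R * (kronVecId x + idKronVec x)) with hM_def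
  have hFp : Fprime α R x = 1 - M := rfl
  -- entries of M are nonnegative
  have hM0 : ∀ i j, 0 ≤ M i j := by
    intro i j
    refine mul_nonneg hα0.le (Finset.sum_nonneg fun p _ => mul_nonneg (hR0 i p) ?_)
    simp only [Matrix.add_apply, kronVecId, idKronVec, Matrix.of_apply]
    have h1 := hx0 p.1
    have h2 := hx0 p.2
    refine add_nonneg (mul_nonneg h1 ?_) (mul_nonneg ?_ h2) <;> split <;> norm_num
  -- column sums of M equal 2 α s
  have hMcol : ∀ j, ∑ i, M i j = 2 * α * s := by
    intro j
    have h1 : ∑ i, M i j = α * ∑ p, (∑ i, R i p) * ((kronVecId x + idKronVec x) p j) := by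
      simp only [hM_def, Matrix.smul_apply, Matrix.mul_apply, smul_eq_mul]
      rw [← Finset.mul_sum, Finset.sum_comm]
      congr 1
      exact Finset.sum_congr rfl fun p _ => (Finset.sum_mul _ _ _).symm
    rw [h1]
    simp only [hRcol, one_mul, Matrix.add_apply, kronVecId, idKronVec, Matrix.of_apply]
    rw [Finset.sum_add_distrib, Fintype.sum_prod_type, Fintype.sum_prod_type]
    simp only [mul_ite, mul_one, mul_zero, ite_mul, one_mul, zero_mul,
      Finset.sum_ite_eq', Finset.mem_univ, if_true]
    have h3 : ∑ a : Fin n, ∑ b : Fin n, (if a = j then x b else 0) = ∑ b : Fin n, x b := by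
      rw [Finset.sum_comm]
      simp [Finset.sum_ite_eq']
    rw [h3, ← hs_def]
    ring
  -- the transpose has linfty operator norm < 1
  set N : Matrix (Fin n) (Fin n) ℝ := Mᵀ with hN_def
  have hNnorm : ‖N‖ < 1 := by
    rw [Matrix.linfty_opNorm_def]
    have h1 : ((1 : NNReal) : ℝ) = 1 := by norm_num
    rw [← h1, NNReal.coe_lt_coe]
    refine (Finset.sup_lt_iff (by norm_num)).mpr fun i _ => ?_
    rw [← NNReal.coe_lt_coe, NNReal.coe_sum]
    have h2 : ∀ j : Fin n, ((‖N i j‖₊ : ℝ)) = M j i := fun j => by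
      rw [coe_nnnorm, Real.norm_eq_abs]
      exact abs_of_nonneg (hM0 j i)
    rw [Finset.sum_congr rfl fun j _ => h2 j]
    calc ∑ j, M j i = 2 * α * s := hMcol i
    _ < 1 := by nlinarith
  have hUnitN : IsUnit ((1 : Matrix (Fin n) (Fin n) ℝ) - N) :=
    isUnit_one_sub_of_norm_lt_one hNnorm
  have htrans : ((1 : Matrix (Fin n) (Fin n) ℝ) - M)ᵀ = 1 - N := by
    rw [Matrix.transpose_sub, Matrix.transpose_one]
  have hUnit : IsUnit (Fprime α R x) := by
    rw [hFp, Matrix.isUnit_iff_isUnit_det, ← Matrix.det_transpose, htrans,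
      ← Matrix.isUnit_iff_isUnit_det]
    exact hUnitN
  -- Neumann series: the inverse is entrywise nonnegative
  set S : Matrix (Fin n) (Fin n) ℝ := Ring.inverse (1 - N) with hS_def
  have hS : HasSum (fun k : ℕ => N ^ k) S := hasSum_geom_series_inverse N hNnorm
  have hNpow0 : ∀ (k : ℕ) (i j : Fin n), 0 ≤ (N ^ k) i j := by
    intro k
    induction k with
    | zero =>
      intro i j
      rw [pow_zero]
      by_cases hij : i = j <;> simp [Matrix.one_apply, hij]
    | succ k ih =>
      intro i j
      rw [pow_succ, Matrix.mul_apply]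
      refine Finset.sum_nonneg fun l _ => mul_nonneg (ih i l) ?_
      exact hM0 j l
  have hS0 : ∀ i j, 0 ≤ S i j := by
    intro i j
    have hev : Continuous fun A : Matrix (Fin n) (Fin n) ℝ => A i j :=
      (continuous_apply j).comp (continuous_apply i)
    have ht2 : Tendsto (fun m => (∑ k ∈ Finset.range m, N ^ k) i j) atTop (nhds (S i j)) :=
      (hev.tendsto S).comp hS.tendsto_sum_nat
    refine ge_of_tendsto' ht2 fun m => ?_
    rw [Matrix.sum_apply]
    exact Finset.sum_nonneg fun k _ => hNpow0 k i j
  have hinv : (Fprime α R x)⁻¹ = Sᵀ := by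
    rw [hFp]
    calc (1 - M)⁻¹ = ((1 - M)⁻¹ᵀ)ᵀ := (Matrix.transpose_transpose _).symm
    _ = ((1 - M)ᵀ⁻¹)ᵀ := by rw [Matrix.transpose_nonsing_inv]
    _ = ((1 - N)⁻¹)ᵀ := by rw [htrans]
    _ = Sᵀ := by rw [Matrix.nonsing_inv_eq_ringInverse, ← hS_def]
  -- the Newton step
  set g : Fin n → ℝ := -(Fmap α R v x) with hg_def
  have hg0 : ∀ i, 0 ≤ g i := fun i => by
    have := hFx i
    simpa [hg_def] using this
  set h : Fin n → ℝ := (Fprime α R x)⁻¹.mulVec g with hh_def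
  have hh0 : ∀ i, 0 ≤ h i := by
    intro i
    rw [hh_def, hinv]
    simp only [Matrix.mulVec, dotProduct, Matrix.transpose_apply]
    exact Finset.sum_nonneg fun j _ => mul_nonneg (hS0 j i) (hg0 j)
  have hyxh : y = x + h := by
    rw [hy, hh_def, hg_def, Matrix.mulVec_neg, sub_eq_add_neg]
  have hxy : x ≤ y := by
    intro i
    rw [hyxh]
    simpa using hh0 i
  -- F'ₓ h = g
  have hFh : (Fprime α R x).mulVec h = g := by
    rw [hh_def, Matrix.mulVec_mulVec,
      Matrix.mul_nonsing_inv _ ((Matrix.isUnit_iff_isUnit_det _).mp hUnit),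
      Matrix.one_mulVec]
  have hMh : M.mulVec h = α • (R.mulVec (kron x h) + R.mulVec (kron h x)) := by
    rw [hM_def, Matrix.smul_mulVec, ← Matrix.mulVec_mulVec, Matrix.add_mulVec,
      kronVecId_mulVec, idKronVec_mulVec, Matrix.mulVec_add]
  have hhM : h - M.mulVec h = g := by
    have h4 := hFh
    rw [hFp, Matrix.sub_mulVec, Matrix.one_mulVec] at h4
    exact h4
  -- F(y) = -α R (h ⊗ h)
  have hFy : Fmap α R v y = -(α • R.mulVec (kron h h)) := by
    rw [hyxh]
    unfold Fmap
    rw [kron_expand, Matrix.mulVec_add, Matrix.mulVec_add, Matrix.mulVec_add]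
    funext i
    have h5 := congrFun hhM i
    rw [hMh] at h5
    have h6 : g i = -(x i - α * R.mulVec (kron x x) i - (1 - α) * v i) := by
      simp [hg_def, Fmap]
    simp only [Pi.add_apply, Pi.sub_apply, Pi.smul_apply, Pi.neg_apply, smul_eq_mul] at h5 h6 ⊢
    linarith
  have hFy0 : Fmap α R v y ≤ 0 := by
    intro i
    rw [hFy]
    simp only [Pi.neg_apply, Pi.smul_apply, smul_eq_mul, Pi.zero_apply, neg_nonpos]
    refine mul_nonneg hα0.le (Finset.sum_nonneg fun p _ => ?_)
    exact mul_nonneg (hR0 i p) (mul_nonneg (hh0 p.1) (hh0 p.2))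
  -- sum bound
  have hsumMh : ∑ i, M.mulVec h i = 2 * α * s * ∑ j, h j := by
    simp only [Matrix.mulVec, dotProduct]
    rw [Finset.sum_comm]
    calc ∑ j, ∑ i, M i j * h j
        = ∑ j, (2 * α * s) * h j := by
          refine Finset.sum_congr rfl fun j _ => ?_
          rw [← Finset.sum_mul, hMcol]
    _ = 2 * α * s * ∑ j, h j := by rw [← Finset.mul_sum]
  have hsumg : ∑ i, g i = α * s * s + (1 - α) - s := by
    have : ∑ i, g i = -(∑ i, Fmap α R v x i) := by
      simp [hg_def]
    rw [this]
    have h7 : ∑ i, Fmap α R v x i = s - α * (s * s) - (1 - α) := by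
      simp only [Fmap, Pi.sub_apply, Pi.smul_apply, smul_eq_mul]
      rw [Finset.sum_sub_distrib, Finset.sum_sub_distrib, ← Finset.mul_sum, ← Finset.mul_sum,
        sum_mulVec R hRcol, sum_kron, hv1, ← hs_def]
      ring
    rw [h7]
    ring
  set t : ℝ := ∑ i, h i with ht_def
  have ht0 : 0 ≤ t := Finset.sum_nonneg fun i _ => hh0 i
  have hteq : t - 2 * α * s * t = α * s * s + (1 - α) - s := by
    have h8 := congrArg (fun w : Fin n → ℝ => ∑ i, w i) hhM
    simp only [Pi.sub_apply, Finset.sum_sub_distrib] at h8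
    rw [hsumMh, hsumg, ← ht_def] at h8
    exact h8
  have hsy : ∑ i, y i = s + t := by
    rw [hyxh]
    simp [Finset.sum_add_distrib, ← hs_def, ← ht_def]
  refine ⟨hUnit, hFy0, hx0, hxy, ?_⟩
  rw [hsy]
  have hpos : 0 < 1 - 2 * α * s := by nlinarith
  have hkey : (1 - s - t) * (1 - 2 * α * s) = α * (1 - s) ^ 2 := by nlinarith [hteq]
  nlinarith [hkey, hpos, mul_nonneg hα0.le (sq_nonneg (1 - s))]
end
end

section
/- Suppose x ∈ ℝⁿ satisfies F(x) ≤ 0 entrywise, 0 ≤ x entrywise, and eᵀx ≤ 1, and let z ∈ ℝⁿ satisfy 0 ≤ z ≤ x entrywise. Then x ≤ x − (F'_z)⁻¹F(x) ≤ x − (F'ₓ)⁻¹F(x) entrywise; that is, the modified Newton step with derivative evaluated at z lies between x and the full Newton step. -/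
open Matrix BigOperators Finset Filter

noncomputable section

/-!
Write `F'ᵤ = I - J(u)` with `J(u) = α R (u ⊗ I + I ⊗ u)`. For `0 ≤ u` the matrix `J(u)` is
nonnegative, monotone in `u`, and has column sums `2α ∑ⱼ uⱼ < 1`; so its transpose has
`ℓ∞`-operator norm `< 1` and the Neumann series `∑ J(u)ᵏ` gives `(F'ᵤ)⁻¹ ≥ 0`. The resolvent
identity `(F'ₓ)⁻¹ - (F'_z)⁻¹ = (F'ₓ)⁻¹ (J(x) - J(z)) (F'_z)⁻¹` then gives `(F'_z)⁻¹ ≤ (F'ₓ)⁻¹`,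
and applying these nonnegative, ordered matrices to `-F(x) ≥ 0` yields both inequalities.
-/

namespace Matrix

attribute [local instance] Matrix.linftyOpNormedRing Matrix.linftyOpNormedAlgebra

lemma mul_apply_nonneg {l m o : Type*} [Fintype m] {C : Matrix l m ℝ} {D : Matrix m o ℝ}
    (hC : ∀ i j, 0 ≤ C i j) (hD : ∀ i j, 0 ≤ D i j) (i : l) (k : o) : 0 ≤ (C * D) i k :=
  Finset.sum_nonneg fun j _ => mul_nonneg (hC i j) (hD j k)

lemma mulVec_le_mulVec_of_nonpos {ι κ : Type*} [Fintype κ] {P Q : Matrix ι κ ℝ}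
    (hPQ : ∀ i j, P i j ≤ Q i j) {f : κ → ℝ} (hf : f ≤ 0) : Q *ᵥ f ≤ P *ᵥ f := fun i =>
  Finset.sum_le_sum fun j _ => mul_le_mul_of_nonpos_right (hPQ i j) (hf j)

variable {ι : Type*} [Fintype ι] [DecidableEq ι] {A B : Matrix ι ι ℝ}

lemma linfty_opNorm_transpose_lt_one (hA : ∀ i j, 0 ≤ A i j)
    (hcol : ∀ j, ∑ i, A i j < 1) : ‖Aᵀ‖ < 1 := by
  rw [linfty_opNorm_def, ← NNReal.coe_one, NNReal.coe_lt_coe]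
  refine (Finset.sup_lt_iff zero_lt_one).mpr fun j _ => ?_
  rw [← NNReal.coe_lt_coe]
  push_cast
  simpa only [transpose_apply, Real.norm_of_nonneg (hA _ _)] using hcol j

lemma isUnit_det_one_sub (hA : ∀ i j, 0 ≤ A i j) (hcol : ∀ j, ∑ i, A i j < 1) :
    IsUnit (1 - A).det := by
  rw [← det_transpose, transpose_sub, transpose_one, ← isUnit_iff_isUnit_det]
  exact (Units.oneSub Aᵀ (linfty_opNorm_transpose_lt_one hA hcol)).isUnit

lemma inv_one_sub_apply_nonneg (hA : ∀ i j, 0 ≤ A i j)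
    (hcol : ∀ j, ∑ i, A i j < 1) (i j : ι) : 0 ≤ (1 - A)⁻¹ i j := by
  have hneumann : HasSum (fun k => Aᵀ ^ k) (1 - Aᵀ)⁻¹ :=
    nonsing_inv_eq_ringInverse (1 - Aᵀ) ▸
      hasSum_geom_series_inverse _ (linfty_opNorm_transpose_lt_one hA hcol)
  have hentry : HasSum (fun k => (Aᵀ ^ k) j i) ((1 - A)⁻¹ i j) := by
    rw [← transpose_apply (1 - A)⁻¹, transpose_nonsing_inv, transpose_sub, transpose_one]
    exact Pi.hasSum.mp (Pi.hasSum.mp hneumann j) i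
  exact hentry.nonneg fun k => pow_apply_nonneg (fun i j => hA j i) k j i

lemma inv_one_sub_apply_mono (hA : ∀ i j, 0 ≤ A i j) (hAB : ∀ i j, A i j ≤ B i j)
    (hcol : ∀ j, ∑ i, B i j < 1) (i j : ι) : (1 - A)⁻¹ i j ≤ (1 - B)⁻¹ i j := by
  have hB : ∀ i j, 0 ≤ B i j := fun i j => (hA i j).trans (hAB i j)
  have hcolA : ∀ j, ∑ i, A i j < 1 := fun j =>
    (Finset.sum_le_sum fun i _ => hAB i j).trans_lt (hcol j)
  have hresolvent : (1 - B)⁻¹ - (1 - A)⁻¹ = (1 - B)⁻¹ * (B - A) * (1 - A)⁻¹ := by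
    rw [← sub_sub_sub_cancel_left A B 1, mul_sub, sub_mul,
      mul_nonsing_inv_cancel_right _ _ (isUnit_det_one_sub hA hcolA),
      nonsing_inv_mul _ (isUnit_det_one_sub hB hcol), one_mul]
  rw [← sub_nonneg, ← sub_apply, hresolvent]
  refine mul_apply_nonneg (mul_apply_nonneg (inv_one_sub_apply_nonneg hB hcol) ?_)
    (inv_one_sub_apply_nonneg hA hcolA) i j
  exact fun i j => sub_nonneg.mpr (hAB i j)

end Matrix

/-- The Jacobian of `x ↦ α R (x ⊗ x)`, so that `Fprime α R u = 1 - quadDeriv α R u`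
definitionally. -/
def quadDeriv {n : ℕ} (α : ℝ) (R : Matrix (Fin n) (Fin n × Fin n) ℝ) (u : Fin n → ℝ) :
    Matrix (Fin n) (Fin n) ℝ :=
  α • (R * (kronVecId u + idKronVec u))

section quadDeriv

variable {n : ℕ} {α : ℝ} {R : Matrix (Fin n) (Fin n × Fin n) ℝ} {u w : Fin n → ℝ}

lemma quadDeriv_apply (i k : Fin n) :
    quadDeriv α R u i k = α * ∑ j, (R i (j, k) + R i (k, j)) * u j := by
  simp only [quadDeriv, Matrix.smul_apply, Matrix.add_apply, mul_apply, kronVecId, idKronVec,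
    of_apply, Fintype.sum_prod_type, mul_add, add_mul, Finset.sum_add_distrib, mul_ite, ite_mul,
    mul_one, one_mul, mul_zero, zero_mul, Finset.sum_ite_irrel, Finset.sum_const_zero,
    Finset.sum_ite_eq', Finset.mem_univ, if_true, smul_eq_mul]

lemma quadDeriv_apply_nonneg (hα : 0 ≤ α) (hR : ∀ i p, 0 ≤ R i p) (hu : 0 ≤ u) (i k : Fin n) :
    0 ≤ quadDeriv α R u i k := by
  rw [quadDeriv_apply]
  exact mul_nonneg hα (Finset.sum_nonneg fun j _ =>
    mul_nonneg (add_nonneg (hR _ _) (hR _ _)) (hu j))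

lemma quadDeriv_apply_mono (hα : 0 ≤ α) (hR : ∀ i p, 0 ≤ R i p) (huw : u ≤ w) (i k : Fin n) :
    quadDeriv α R u i k ≤ quadDeriv α R w i k := by
  rw [quadDeriv_apply, quadDeriv_apply]
  exact mul_le_mul_of_nonneg_left (Finset.sum_le_sum fun j _ =>
    mul_le_mul_of_nonneg_left (huw j) (add_nonneg (hR _ _) (hR _ _))) hα

lemma sum_quadDeriv_apply (hR : ∀ p, ∑ i, R i p = 1) (k : Fin n) :
    ∑ i, quadDeriv α R u i k = 2 * α * ∑ j, u j := by
  simp_rw [quadDeriv_apply, ← Finset.mul_sum]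
  rw [Finset.sum_comm]
  simp_rw [← Finset.sum_mul, Finset.sum_add_distrib, hR, Finset.mul_sum]
  ring_nf

lemma sum_quadDeriv_apply_lt_one (hα0 : 0 ≤ α) (hα : α < 1 / 2) (hR : ∀ p, ∑ i, R i p = 1)
    (hu : ∑ j, u j ≤ 1) (k : Fin n) : ∑ i, quadDeriv α R u i k < 1 := by
  rw [sum_quadDeriv_apply hR]
  nlinarith

end quadDeriv

theorem stmt11_general {n : ℕ} (α : ℝ) (hα0 : 0 < α) (hα : α < 1 / 2)
    (R : Matrix (Fin n) (Fin n × Fin n) ℝ) (hR0 : ∀ i p, 0 ≤ R i p)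
    (hRcol : ∀ p, ∑ i, R i p = 1)
    (v : Fin n → ℝ)
    (x : Fin n → ℝ) (hFx : Fmap α R v x ≤ 0) (hx1 : ∑ i, x i ≤ 1)
    (z : Fin n → ℝ) (hz0 : 0 ≤ z) (hzx : z ≤ x) :
    x ≤ x - (Fprime α R z)⁻¹.mulVec (Fmap α R v x) ∧
    x - (Fprime α R z)⁻¹.mulVec (Fmap α R v x) ≤
      x - (Fprime α R x)⁻¹.mulVec (Fmap α R v x) := by
  have hz1 : ∑ i, z i ≤ 1 := (Finset.sum_le_sum fun i _ => hzx i).trans hx1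
  have hJz := quadDeriv_apply_nonneg hα0.le hR0 hz0
  have hinv_nonneg : ∀ i j, 0 ≤ (Fprime α R z)⁻¹ i j :=
    inv_one_sub_apply_nonneg hJz (sum_quadDeriv_apply_lt_one hα0.le hα hRcol hz1)
  have hinv_mono : ∀ i j, (Fprime α R z)⁻¹ i j ≤ (Fprime α R x)⁻¹ i j :=
    inv_one_sub_apply_mono hJz (quadDeriv_apply_mono hα0.le hR0 hzx)
      (sum_quadDeriv_apply_lt_one hα0.le hα hRcol hx1)
  constructor
  · rw [le_sub_self_iff]
    simpa using mulVec_le_mulVec_of_nonpos (P := 0) hinv_nonneg hFx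
  · exact sub_le_sub_left (mulVec_le_mulVec_of_nonpos hinv_mono hFx) x

theorem stmt11 {n : ℕ} (hn : 1 ≤ n) (α : ℝ) (hα0 : 0 < α) (hα : α < 1 / 2)
    (R : Matrix (Fin n) (Fin n × Fin n) ℝ) (hR0 : ∀ i p, 0 ≤ R i p)
    (hRcol : ∀ p, ∑ i, R i p = 1)
    (v : Fin n → ℝ) (hv0 : 0 ≤ v) (hv1 : ∑ i, v i = 1)
    (x : Fin n → ℝ) (hFx : Fmap α R v x ≤ 0) (hx0 : 0 ≤ x) (hx1 : ∑ i, x i ≤ 1)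
    (z : Fin n → ℝ) (hz0 : 0 ≤ z) (hzx : z ≤ x) :
    x ≤ x - (Fprime α R z)⁻¹.mulVec (Fmap α R v x) ∧
    x - (Fprime α R z)⁻¹.mulVec (Fmap α R v x) ≤
      x - (Fprime α R x)⁻¹.mulVec (Fmap α R v x) :=
  stmt11_general α hα0 hα R hR0 hRcol v x hFx hx1 z hz0 hzx
end
end

section
/- (Existence of a nonnegative solution for α < 1/2.) There exists a vector x* ∈ ℝⁿ with 0 ≤ x* entrywise and eᵀx* ≤ 1 such that x* = αR(x* ⊗ x*) + (1−α)v. -/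
open Matrix BigOperators Finset Filter

noncomputable section

theorem stmt16 {n : ℕ} (hn : 1 ≤ n) (α : ℝ) (hα0 : 0 < α) (hα : α < 1 / 2)
    (R : Matrix (Fin n) (Fin n × Fin n) ℝ) (hR0 : ∀ i p, 0 ≤ R i p)
    (hRcol : ∀ p, ∑ i, R i p = 1)
    (v : Fin n → ℝ) (hv0 : 0 ≤ v) (hv1 : ∑ i, v i = 1) :
    ∃ xstar : Fin n → ℝ, 0 ≤ xstar ∧ ∑ i, xstar i ≤ 1 ∧
      xstar = α • R.mulVec (kron xstar xstar) + (1 - α) • v := by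
  set T : (Fin n → ℝ) → (Fin n → ℝ) :=
    fun x => α • R.mulVec (kron x x) + (1 - α) • v with hT
  have hα1 : α ≤ 1 := le_of_lt (hα.trans (by norm_num))
  have hTapp : ∀ (x : Fin n → ℝ) (i : Fin n),
      T x i = α * (∑ p, R i p * (x p.1 * x p.2)) + (1 - α) * v i := by
    intro x i
    simp [hT, Matrix.mulVec, dotProduct, kron, Finset.mul_sum]
  -- sum of T x
  have hTsum : ∀ x : Fin n → ℝ, ∑ i, T x i = α * (∑ i, x i)^2 + (1 - α) := by
    intro x
    have h1 : ∑ i, T x i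
        = α * (∑ p : Fin n × Fin n, (∑ i, R i p) * (x p.1 * x p.2)) + (1 - α) * ∑ i, v i := by
      simp only [hTapp]
      rw [Finset.sum_add_distrib, ← Finset.mul_sum, ← Finset.mul_sum,
        Finset.sum_comm]
      simp [Finset.sum_mul]
    rw [h1, hv1]
    have h2 : ∑ p : Fin n × Fin n, (∑ i, R i p) * (x p.1 * x p.2)
        = (∑ i, x i)^2 := by
      simp only [hRcol, one_mul]
      rw [Fintype.sum_prod_type, sq, Finset.sum_mul_sum]
    rw [h2]; ring
  -- monotonicity on nonnegative vectors
  have hmono : ∀ x y : Fin n → ℝ, 0 ≤ x → x ≤ y → T x ≤ T y := by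
    intro x y hx hxy i
    simp only [hTapp]
    have : (∑ p, R i p * (x p.1 * x p.2)) ≤ ∑ p, R i p * (y p.1 * y p.2) := by
      apply Finset.sum_le_sum
      intro p _
      have := mul_le_mul (hxy p.1) (hxy p.2) (hx p.2) ((hx p.1).trans (hxy p.1))
      exact mul_le_mul_of_nonneg_left this (hR0 i p)
    nlinarith
  have hnonneg : ∀ x : Fin n → ℝ, 0 ≤ x → 0 ≤ T x := by
    intro x hx i
    simp only [Pi.zero_apply, hTapp]
    have h1 : 0 ≤ ∑ p, R i p * (x p.1 * x p.2) :=
      Finset.sum_nonneg fun p _ => mul_nonneg (hR0 i p) (mul_nonneg (hx p.1) (hx p.2))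
    have h2 : (0:ℝ) ≤ v i := hv0 i
    nlinarith
  -- the iteration
  set s : ℕ → (Fin n → ℝ) := fun k => T^[k] 0 with hs
  have hs0 : s 0 = 0 := rfl
  have hsucc : ∀ k, s (k + 1) = T (s k) := by
    intro k; simp [hs, Function.iterate_succ_apply']
  have hsnonneg : ∀ k, 0 ≤ s k := by
    intro k; induction k with
    | zero => exact le_refl _
    | succ k ih => rw [hsucc]; exact hnonneg _ ih
  have hssum : ∀ k, ∑ i, s k i ≤ 1 := by
    intro k; induction k with
    | zero => simp [hs0]
    | succ k ih =>
      rw [hsucc, hTsum]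
      have h0 : 0 ≤ ∑ i, s k i := Finset.sum_nonneg fun i _ => hsnonneg k i
      have hsq : (∑ i, s k i)^2 ≤ 1 := by nlinarith
      nlinarith
  have hsmono : ∀ k, s k ≤ s (k + 1) := by
    intro k; induction k with
    | zero => rw [hs0, hsucc, hs0]; exact hnonneg 0 (le_refl _)
    | succ k ih =>
      rw [hsucc, hsucc]
      exact hmono _ _ (hsnonneg k) ih
  have hsmono' : ∀ i, Monotone fun k => s k i := by
    intro i
    apply monotone_nat_of_le_succ
    intro k; exact hsmono k i
  have hbdd : ∀ i, BddAbove (Set.range fun k => s k i) := by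
    intro i
    refine ⟨1, ?_⟩
    rintro _ ⟨k, rfl⟩
    calc s k i ≤ ∑ j, s k j :=
          Finset.single_le_sum (fun j _ => hsnonneg k j) (Finset.mem_univ i)
      _ ≤ 1 := hssum k
  set xstar : Fin n → ℝ := fun i => ⨆ k, s k i with hxstar
  have htend : ∀ i, Tendsto (fun k => s k i) atTop (nhds (xstar i)) := by
    intro i
    exact tendsto_atTop_ciSup (hsmono' i) (hbdd i)
  have hxnn : 0 ≤ xstar := by
    intro i
    have := le_ciSup (hbdd i) 0
    simpa [hs0] using this
  have hxsum : ∑ i, xstar i ≤ 1 := by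
    have : Tendsto (fun k => ∑ i, s k i) atTop (nhds (∑ i, xstar i)) :=
      tendsto_finset_sum _ fun i _ => htend i
    exact le_of_tendsto this (Filter.Eventually.of_forall hssum)
  have hTx : ∀ i, Tendsto (fun k => T (s k) i) atTop (nhds (T xstar i)) := by
    intro i
    simp only [hTapp]
    apply Tendsto.add
    · apply Tendsto.const_mul
      apply tendsto_finset_sum
      intro p _
      exact ((htend p.1).mul (htend p.2)).const_mul _
    · exact tendsto_const_nhds
  have hfix : xstar = T xstar := by
    funext i
    have h1 : Tendsto (fun k => s (k + 1) i) atTop (nhds (xstar i)) :=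
      (htend i).comp (tendsto_add_atTop_nat 1)
    have h2 : Tendsto (fun k => s (k + 1) i) atTop (nhds (T xstar i)) := by
      simpa only [hsucc] using hTx i
    exact tendsto_nhds_unique h1 h2
  exact ⟨xstar, hxnn, hxsum, hfix⟩
end
end
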